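/- arXiv:math/9911137 — 2 statements merged into one kernel-verified Lean document; each statement's English description precedes it below -/
import Mathlib

section
/- If R is a left noetherian ring and a left IF-ring, then R is a left FGF-ring. If R is a left coherent ring and a left FGF-ring, then R is left noetherian and a left IF-ring. -/
/-!
Common definitions: rings are associative with identity, not necessarily commutative.
Left `R`-modules are `Module R M`; right `R`-modules are `Module Rᵐᵒᵖ M`.
-/

universe u

open MulOpposite Function Pointwise

section Defs

variable (R : Type u) [Ring R]

/-- Defining relations of the tensor product `K ⊗_R M` of a right `R`-module `K`
and a left `R`-module `M`, inside the free abelian group on `K × M`. -/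
def TensorRels (K M : Type u) [AddCommGroup K] [Module Rᵐᵒᵖ K]
    [AddCommGroup M] [Module R M] : AddSubgroup (FreeAbelianGroup (K × M)) :=
  AddSubgroup.closure
    ({x | ∃ k₁ k₂ m, x = FreeAbelianGroup.of (k₁ + k₂, m) - FreeAbelianGroup.of (k₁, m) -
        FreeAbelianGroup.of (k₂, m)} ∪
     {x | ∃ k m₁ m₂, x = FreeAbelianGroup.of (k, m₁ + m₂) - FreeAbelianGroup.of (k, m₁) -
        FreeAbelianGroup.of (k, m₂)} ∪
     {x | ∃ (r : R) (k : K) (m : M),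
        x = FreeAbelianGroup.of (op r • k, m) - FreeAbelianGroup.of (k, r • m)})

/-- The tensor product `K ⊗_R M` of a right `R`-module `K` and a left `R`-module `M`
over the (not necessarily commutative) ring `R`, as an abelian group. -/
def NCTensor (K M : Type u) [AddCommGroup K] [Module Rᵐᵒᵖ K]
    [AddCommGroup M] [Module R M] : Type u :=
  FreeAbelianGroup (K × M) ⧸ TensorRels R K M

instance (K M : Type u) [AddCommGroup K] [Module Rᵐᵒᵖ K] [AddCommGroup M] [Module R M] :
    AddCommGroup (NCTensor R K M) :=
  QuotientAddGroup.Quotient.addCommGroup _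

/-- The map `μ ⊗ ν : K ⊗_R M → K' ⊗_R M'` induced by a map `μ` of right `R`-modules
and a map `ν` of left `R`-modules. -/
def tensorCongr {K K' M M' : Type u} [AddCommGroup K] [Module Rᵐᵒᵖ K]
    [AddCommGroup K'] [Module Rᵐᵒᵖ K'] [AddCommGroup M] [Module R M]
    [AddCommGroup M'] [Module R M'] (μ : K →ₗ[Rᵐᵒᵖ] K') (ν : M →ₗ[R] M') :
    NCTensor R K M →+ NCTensor R K' M' :=
  QuotientAddGroup.map (TensorRels R K M) (TensorRels R K' M')
    (FreeAbelianGroup.lift fun p : K × M => FreeAbelianGroup.of (μ p.1, ν p.2))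
    (by
      refine (AddSubgroup.closure_le _).2 ?_
      rintro x ((⟨k₁, k₂, m, rfl⟩ | ⟨k, m₁, m₂, rfl⟩) | ⟨r, k, m, rfl⟩) <;>
        refine AddSubgroup.mem_comap.2 (AddSubgroup.subset_closure ?_)
      · exact Or.inl <| Or.inl ⟨μ k₁, μ k₂, ν m, by simp [map_add]⟩
      · exact Or.inl <| Or.inr ⟨μ k, ν m₁, ν m₂, by simp [map_add]⟩
      · exact Or.inr ⟨r, μ k, ν m, by simp [map_smul]⟩)

/-- A left `R`-module `M` is flat if `μ ⊗ M` is injective for every injective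
homomorphism `μ` of right `R`-modules. -/
def ModFlat (M : Type u) [AddCommGroup M] [Module R M] : Prop :=
  ∀ (K L : Type u) [AddCommGroup K] [Module Rᵐᵒᵖ K] [AddCommGroup L] [Module Rᵐᵒᵖ L]
    (μ : K →ₗ[Rᵐᵒᵖ] L), Injective μ →
      Injective (tensorCongr R μ (LinearMap.id : M →ₗ[R] M))

/-- A right `R`-module `M` is flat if `M ⊗ μ` is injective for every injective
homomorphism `μ` of left `R`-modules. -/
def ModFlatRight (M : Type u) [AddCommGroup M] [Module Rᵐᵒᵖ M] : Prop :=
  ∀ (K L : Type u) [AddCommGroup K] [Module R K] [AddCommGroup L] [Module R L]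
    (μ : K →ₗ[R] L), Injective μ →
      Injective (tensorCongr R (LinearMap.id : M →ₗ[Rᵐᵒᵖ] M) μ)

/-- A left `R`-module `M` is fp-flat if `μ ⊗ M` is injective for every injective
homomorphism `μ` of finitely presented right `R`-modules. -/
def FpFlat (M : Type u) [AddCommGroup M] [Module R M] : Prop :=
  ∀ (K L : Type u) [AddCommGroup K] [Module Rᵐᵒᵖ K] [AddCommGroup L] [Module Rᵐᵒᵖ L],
    Module.FinitePresentation Rᵐᵒᵖ K → Module.FinitePresentation Rᵐᵒᵖ L →
    ∀ (μ : K →ₗ[Rᵐᵒᵖ] L), Injective μ →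
      Injective (tensorCongr R μ (LinearMap.id : M →ₗ[R] M))

/-- A right `R`-module `M` is fp-flat if `M ⊗ μ` is injective for every injective
homomorphism `μ` of finitely presented left `R`-modules. -/
def FpFlatRight (M : Type u) [AddCommGroup M] [Module Rᵐᵒᵖ M] : Prop :=
  ∀ (K L : Type u) [AddCommGroup K] [Module R K] [AddCommGroup L] [Module R L],
    Module.FinitePresentation R K → Module.FinitePresentation R L →
    ∀ (μ : K →ₗ[R] L), Injective μ →
      Injective (tensorCongr R (LinearMap.id : M →ₗ[Rᵐᵒᵖ] M) μ)

/-- `Ext¹_R(F, M) = 0`. -/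
def ExtVanish (F M : Type u) [AddCommGroup F] [Module R F] [AddCommGroup M] [Module R M] :
    Prop :=
  Subsingleton
    (((Ext ℤ (ModuleCat.{u} R) 1).obj (Opposite.op (ModuleCat.of R F))).obj (ModuleCat.of R M))

/-- A left `R`-module `M` is FP-injective (absolutely pure) if `Ext¹_R(F, M) = 0` for
every finitely presented left `R`-module `F`. -/
def FPInjective (M : Type u) [AddCommGroup M] [Module R M] : Prop :=
  ∀ (F : Type u) [AddCommGroup F] [Module R F], Module.FinitePresentation R F → ExtVanish R F M

/-- A left `R`-module `M` is fp-injective if for every injective homomorphism `μ : K → L`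
of finitely presented left `R`-modules, the induced map `Hom(L, M) → Hom(K, M)` is
surjective. -/
def FpInjective (M : Type u) [AddCommGroup M] [Module R M] : Prop :=
  ∀ (K L : Type u) [AddCommGroup K] [Module R K] [AddCommGroup L] [Module R L],
    Module.FinitePresentation R K → Module.FinitePresentation R L →
    ∀ (μ : K →ₗ[R] L), Injective μ → ∀ f : K →ₗ[R] M, ∃ g : L →ₗ[R] M, g ∘ₗ μ = f

/-- A left `R`-module `K` is an FP-cogenerator if for every nonzero homomorphism
`f : M → N` from a finitely generated module `M` to a finitely presented module `N`
there is `g : N → K` with `g ∘ f ≠ 0`. -/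
def IsFPCogenerator (K : Type u) [AddCommGroup K] [Module R K] : Prop :=
  ∀ (M N : Type u) [AddCommGroup M] [Module R M] [AddCommGroup N] [Module R N],
    Module.Finite R M → Module.FinitePresentation R N →
    ∀ f : M →ₗ[R] N, f ≠ 0 → ∃ g : N →ₗ[R] K, g ∘ₗ f ≠ 0

/-- A left `R`-module `K` is a cogenerator if for every nonzero homomorphism `f : M → N`
of left `R`-modules there is `g : N → K` with `g ∘ f ≠ 0`. -/
def IsCogenerator (K : Type u) [AddCommGroup K] [Module R K] : Prop :=
  ∀ (M N : Type u) [AddCommGroup M] [Module R M] [AddCommGroup N] [Module R N],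
    ∀ f : M →ₗ[R] N, f ≠ 0 → ∃ g : N →ₗ[R] K, g ∘ₗ f ≠ 0

/-- The canonical evaluation map `M → M** = Hom(Hom(M, R), R)` for a left `R`-module `M`;
here `M* = Hom_R(M, R)` is a right `R`-module. -/
def dualEval (M : Type u) [AddCommGroup M] [Module R M] :
    M →ₗ[R] ((M →ₗ[R] R) →ₗ[Rᵐᵒᵖ] R) where
  toFun m :=
    { toFun := fun f => f m
      map_add' := fun f g => rfl
      map_smul' := fun r f => rfl }
  map_add' m m' := LinearMap.ext fun f => f.map_add m m'
  map_smul' r m := LinearMap.ext fun f => by simp [f.map_smul]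

/-- The canonical evaluation map `M → M** = Hom(Hom(M, R), R)` for a right `R`-module `M`;
here `M* = Hom_R(M, R)` is a left `R`-module. -/
def dualEvalRight (M : Type u) [AddCommGroup M] [Module Rᵐᵒᵖ M] :
    M →ₗ[Rᵐᵒᵖ] ((M →ₗ[Rᵐᵒᵖ] R) →ₗ[R] R) where
  toFun m :=
    { toFun := fun f => f m
      map_add' := fun f g => rfl
      map_smul' := fun r f => rfl }
  map_add' m m' := LinearMap.ext fun f => f.map_add m m'
  map_smul' r m := LinearMap.ext fun f => by simp [f.map_smul]

/-- The left annihilator of a subset `X ⊆ R`. -/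
def lAnn (X : Set R) : Set R := {a | ∀ x ∈ X, a * x = 0}

/-- The right annihilator of a subset `X ⊆ R`. -/
def rAnn (X : Set R) : Set R := {a | ∀ x ∈ X, x * a = 0}

/-- `R` is left coherent: every finitely generated left ideal is finitely presented. -/
def LeftCoherent : Prop :=
  ∀ I : Submodule R R, I.FG → Module.FinitePresentation R I

/-- `R` is right coherent: every finitely generated right ideal is finitely presented. -/
def RightCoherent : Prop :=
  ∀ I : Submodule Rᵐᵒᵖ R, I.FG → Module.FinitePresentation Rᵐᵒᵖ I

/-- A left `R`-module `M` embeds in a free left `R`-module. -/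
def EmbedsInFree (M : Type u) [AddCommGroup M] [Module R M] : Prop :=
  ∃ (ι : Type u) (f : M →ₗ[R] (ι →₀ R)), Injective f

/-- A right `R`-module `M` embeds in a free right `R`-module. -/
def EmbedsInFreeRight (M : Type u) [AddCommGroup M] [Module Rᵐᵒᵖ M] : Prop :=
  ∃ (ι : Type u) (f : M →ₗ[Rᵐᵒᵖ] (ι →₀ R)), Injective f

/-- `R` is a left IF-ring: every finitely presented left `R`-module embeds in a free module. -/
def LeftIF : Prop :=
  ∀ (M : Type u) [AddCommGroup M] [Module R M],
    Module.FinitePresentation R M → EmbedsInFree R M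

/-- `R` is a right IF-ring: every finitely presented right `R`-module embeds in a free module. -/
def RightIF : Prop :=
  ∀ (M : Type u) [AddCommGroup M] [Module Rᵐᵒᵖ M],
    Module.FinitePresentation Rᵐᵒᵖ M → EmbedsInFreeRight R M

/-- A module is cyclic if it is generated by one element. -/
def CyclicModule (M : Type u) [AddCommGroup M] [Module R M] : Prop :=
  ∃ m : M, Submodule.span R {m} = ⊤

/-- `R` is a left CF-ring: every cyclic left `R`-module embeds in a free module. -/
def LeftCF : Prop :=
  ∀ (M : Type u) [AddCommGroup M] [Module R M], CyclicModule R M → EmbedsInFree R M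

/-- `R` is a left FGF-ring: every finitely generated left `R`-module embeds in a free module. -/
def LeftFGF : Prop :=
  ∀ (M : Type u) [AddCommGroup M] [Module R M], Module.Finite R M → EmbedsInFree R M

/-- `R` is a left Kasch ring: `Hom_R(M, R) ≠ 0` for every nonzero cyclic left `R`-module. -/
def LeftKasch : Prop :=
  ∀ (M : Type u) [AddCommGroup M] [Module R M],
    CyclicModule R M → Nontrivial M → ∃ f : M →ₗ[R] R, f ≠ 0

/-- `R` is a right Kasch ring: `Hom_R(M, R) ≠ 0` for every nonzero cyclic right `R`-module. -/
def RightKasch : Prop :=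
  ∀ (M : Type u) [AddCommGroup M] [Module Rᵐᵒᵖ M],
    CyclicModule Rᵐᵒᵖ M → Nontrivial M → ∃ f : M →ₗ[Rᵐᵒᵖ] R, f ≠ 0

/-- The socle of a module: the sum of all its simple submodules. -/
def socle (M : Type u) [AddCommGroup M] [Module R M] : Submodule R M :=
  sSup {N : Submodule R M | IsSimpleModule R N}

/-- `R` is left semiartinian: every nonzero cyclic left `R`-module has a nonzero socle. -/
def LeftSemiartinian : Prop :=
  ∀ (M : Type u) [AddCommGroup M] [Module R M],
    CyclicModule R M → Nontrivial M → socle R M ≠ ⊥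

/-- A submodule `N ⊆ M` is essential if it meets every nonzero submodule nontrivially. -/
def EssentialSub {M : Type u} [AddCommGroup M] [Module R M] (N : Submodule R M) : Prop :=
  ∀ P : Submodule R M, P ≠ ⊥ → N ⊓ P ≠ ⊥

/-- `R` is semiregular: `R/rad R` is von Neumann regular,
where `rad R` is the Jacobson radical. -/
def Semiregular : Prop :=
  ∀ a : R, ∃ x : R, a - a * x * a ∈ Ideal.jacobson (⊥ : Ideal R)

/-- `R` is semiperfect: `R/rad R` is semisimple and idempotents lift modulo `rad R`. -/
def Semiperfect : Prop :=
  IsSemisimpleModule R (R ⧸ Ideal.jacobson (⊥ : Ideal R)) ∧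
    ∀ a : R, a * a - a ∈ Ideal.jacobson (⊥ : Ideal R) →
      ∃ e : R, e * e = e ∧ e - a ∈ Ideal.jacobson (⊥ : Ideal R)

/-- A module is indecomposable if it is nonzero and is not the direct sum of two
nonzero submodules. -/
def IndecModule (M : Type u) [AddCommGroup M] [Module R M] : Prop :=
  Nontrivial M ∧ ∀ A B : Submodule R M, IsCompl A B → A = ⊥ ∨ B = ⊥

/-- `R` is weakly quasi-Frobenius: left and right coherent and left and right FP-injective. -/
def WQF : Prop :=
  LeftCoherent R ∧ RightCoherent R ∧ FPInjective R R ∧ FPInjective Rᵐᵒᵖ R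

/-- `R` is quasi-Frobenius: left and right noetherian and left and right self-injective. -/
def QF : Prop :=
  IsNoetherianRing R ∧ IsNoetherian Rᵐᵒᵖ R ∧ Module.Injective R R ∧ Module.Injective Rᵐᵒᵖ R

end Defs

/-- A group is locally finite if every finitely generated subgroup is finite. -/
def LocallyFiniteGroup (G : Type*) [Group G] : Prop :=
  ∀ H : Subgroup G, H.FG → Finite H

section Aux
variable {R : Type u} [Ring R]

/-- Over a left coherent ring the annihilator ideal of a single element is f.g. -/
lemma ann_fg (hc : ∀ I : Submodule R R, I.FG → Module.FinitePresentation R I) (a : R) :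
    (LinearMap.ker (LinearMap.toSpanSingleton R R a)).FG := by
  have h1 : (Submodule.span R {a}).FG := Submodule.fg_span_singleton a
  have h2 : Module.FinitePresentation R (Submodule.span R {a}) := hc _ h1
  have h3 : LinearMap.range (LinearMap.toSpanSingleton R R a) = Submodule.span R {a} := by
    rw [LinearMap.span_singleton_eq_range]
  have h4 : Module.FinitePresentation R ↥(LinearMap.range (LinearMap.toSpanSingleton R R a)) := by
    rw [h3]; exact h2
  have := Module.FinitePresentation.fg_ker
    (LinearMap.toSpanSingleton R R a).rangeRestrict
    (LinearMap.surjective_rangeRestrict _)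
  rwa [LinearMap.ker_rangeRestrict] at this

lemma inter_fg (hc : ∀ I : Submodule R R, I.FG → Module.FinitePresentation R I)
    {I J : Submodule R R} (hI : I.FG) (hJ : J.FG) : (I ⊓ J).FG := by
  haveI : Module.Finite R I := Module.Finite.iff_fg.mpr hI
  haveI : Module.Finite R J := Module.Finite.iff_fg.mpr hJ
  let g : (I × J) →ₗ[R] R := I.subtype ∘ₗ LinearMap.fst R I J - J.subtype ∘ₗ LinearMap.snd R I J
  have hrfg : (LinearMap.range g).FG := by
    rw [← Submodule.map_top]
    exact (Module.Finite.fg_top (R := R) (M := ↥I × ↥J)).map g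
  haveI : Module.FinitePresentation R ↥(LinearMap.range g) := hc _ hrfg
  have hker : (LinearMap.ker g).FG := by
    have := Module.FinitePresentation.fg_ker g.rangeRestrict (LinearMap.surjective_rangeRestrict _)
    rwa [LinearMap.ker_rangeRestrict] at this
  have heq : I ⊓ J = Submodule.map (I.subtype ∘ₗ LinearMap.fst R I J) (LinearMap.ker g) := by
    ext x
    constructor
    · rintro ⟨hxI, hxJ⟩
      exact ⟨(⟨x, hxI⟩, ⟨x, hxJ⟩), by simp [g, LinearMap.mem_ker], rfl⟩
    · rintro ⟨⟨y, z⟩, hy, rfl⟩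
      have hy : g (y, z) = 0 := hy
      simp only [g, LinearMap.sub_apply, LinearMap.comp_apply, LinearMap.fst_apply,
        LinearMap.snd_apply, Submodule.coe_subtype, sub_eq_zero] at hy
      exact ⟨y.2, by simp [hy, z.2]⟩
  rw [heq]
  exact hker.map _

lemma finsetInf_fg (hc : ∀ I : Submodule R R, I.FG → Module.FinitePresentation R I)
    {ι : Type*} (s : Finset ι) (p : ι → Submodule R R) (hp : ∀ i, (p i).FG) :
    (s.inf p).FG := by
  classical
  induction s using Finset.induction_on with
  | empty => exact ⟨{1}, by simp [Submodule.span_singleton_eq_top_iff, isUnit_one]⟩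
  | insert _ _ h ih => rw [Finset.inf_insert]; exact inter_fg hc (hp _) ih

end Aux

/-- Lemma 2.10(2): a left noetherian left IF-ring is a left FGF-ring; a left coherent left
FGF-ring is left noetherian and a left IF-ring. -/


theorem stmt_12 (R : Type u) [Ring R] :
    (IsNoetherianRing R → LeftIF R → LeftFGF R) ∧
      (LeftCoherent R → LeftFGF R → IsNoetherianRing R ∧ LeftIF R) := by
  constructor
  · intro hnoeth hif M _ _ hfin
    haveI := hnoeth; haveI := hfin
    exact hif M (Module.finitePresentation_of_finite R M)
  · intro hcoh hfgf
    refine ⟨?_, fun M _ _ hfp => by haveI := hfp; exact hfgf M inferInstance⟩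
    rw [isNoetherianRing_iff, isNoetherian_def]
    intro I
    haveI : Module.Finite R (R ⧸ I) :=
      Module.Finite.of_surjective I.mkQ (Submodule.mkQ_surjective I)
    obtain ⟨ι, f, hf⟩ := hfgf (R ⧸ I) inferInstance
    set g : R →ₗ[R] (ι →₀ R) := f ∘ₗ I.mkQ with hg
    have hI : I = LinearMap.ker g := by
      rw [hg, LinearMap.ker_comp, LinearMap.ker_eq_bot.mpr hf, Submodule.comap_bot,
        Submodule.ker_mkQ]
    set v : ι →₀ R := g 1 with hv
    have hgr : ∀ r : R, g r = r • v := by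
      intro r
      rw [hv, ← map_smul]
      congr 1
      rw [smul_eq_mul, mul_one]
    have h0 : ∀ r : R, g r = 0 ↔ ∀ i, r * v i = 0 := by
      intro r
      rw [hgr r]
      constructor
      · intro h i
        have := DFunLike.congr_fun h i
        simpa [smul_eq_mul] using this
      · intro h
        ext i
        simpa [smul_eq_mul] using h i
    have key : I = (v.support).inf
        (fun i => LinearMap.ker (LinearMap.toSpanSingleton R R (v i))) := by
      ext r
      rw [Submodule.mem_finsetInf]
      simp only [LinearMap.mem_ker, LinearMap.toSpanSingleton_apply, smul_eq_mul]
      constructor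
      · intro hr i _
        exact (h0 r).mp (by rw [hI] at hr; exact hr) i
      · intro hr
        rw [hI, LinearMap.mem_ker]
        refine (h0 r).mpr fun i => ?_
        by_cases hi : i ∈ v.support
        · exact hr i hi
        · rw [Finsupp.notMem_support_iff.mp hi, mul_zero]
    rw [key]
    exact finsetInf_fg hcoh _ _ (fun i => ann_fg hcoh _)
end

section
/- Let G be a finite group, R a ring, R(G) the group ring, and M a right R(G)-module. If f = (f_i)_{i∈I} : M → R^I is an injective homomorphism of right R-modules (I an index set), then the map f̃ = (f̃_i)_{i∈I} : M → R(G)^I defined by f̃_i(m) = Σ_{g∈G} f_i(mg)·g^{-1} is an injective homomorphism of right R(G)-modules. -/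
/-!
Common definitions: rings are associative with identity, not necessarily commutative.
Left `R`-modules are `Module R M`; right `R`-modules are `Module Rᵐᵒᵖ M`.
-/

universe u

open MulOpposite Function Pointwise

/-- The map `f̃ : M → R(G)^I` with components `f̃ᵢ(m) = ∑_{g ∈ G} fᵢ(m·g)·g⁻¹`. -/
noncomputable def groupRingExtend (R : Type u) [Ring R] (G : Type u) [Group G] [Fintype G]
    (I : Type u) (M : Type u) [AddCommGroup M] [Module (MonoidAlgebra R G)ᵐᵒᵖ M]
    (f : M → I → R) : M → I → MonoidAlgebra R G :=
  fun m i => ∑ g : G,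
    MonoidAlgebra.single g⁻¹ (f (op (MonoidAlgebra.single g (1 : R)) • m) i)

/-- Lemma 3.1: if `G` is a finite group, `M` a right `R(G)`-module and
`f = (fᵢ) : M → R^I` an injective homomorphism of right `R`-modules, then
`f̃ = (f̃ᵢ) : M → R(G)^I`, `f̃ᵢ(m) = ∑_{g ∈ G} fᵢ(m·g)·g⁻¹`, is an injective homomorphism of
right `R(G)`-modules. -/
theorem stmt_16 (R : Type u) [Ring R] (G : Type u) [Group G] [Fintype G]
    (I : Type u) (M : Type u) [AddCommGroup M] [Module (MonoidAlgebra R G)ᵐᵒᵖ M]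
    (f : M → I → R)
    (hadd : ∀ m m' : M, f (m + m') = f m + f m')
    (hsmul : ∀ (m : M) (r : R),
      f (op (MonoidAlgebra.single (1 : G) r) • m) = fun i => f m i * r)
    (hinj : Injective f) :
    Injective (groupRingExtend R G I M f) ∧
      (∀ m m' : M, groupRingExtend R G I M f (m + m') =
        groupRingExtend R G I M f m + groupRingExtend R G I M f m') ∧
      (∀ (m : M) (s : MonoidAlgebra R G), groupRingExtend R G I M f (op s • m) =
        fun i => groupRingExtend R G I M f m i * s) := by
  classical
  have hf0 : f 0 = 0 := by
    have h := hadd 0 0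
    rw [add_zero] at h
    exact (left_eq_add.mp h)
  -- additivity
  have hAdd : ∀ m m' : M, groupRingExtend R G I M f (m + m') =
      groupRingExtend R G I M f m + groupRingExtend R G I M f m' := by
    intro m m'
    funext i
    show _ = groupRingExtend R G I M f m i + groupRingExtend R G I M f m' i
    unfold groupRingExtend
    rw [← Finset.sum_add_distrib]
    refine Finset.sum_congr rfl fun g _ => ?_
    rw [smul_add, hadd, Pi.add_apply]
    exact MonoidAlgebra.single_add _ _ _
  -- scalar compatibility for a single
  have hSingle : ∀ (m : M) (h : G) (r : R),
      groupRingExtend R G I M f (op (MonoidAlgebra.single h r) • m) =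
        fun i => groupRingExtend R G I M f m i * MonoidAlgebra.single h r := by
    intro m h r
    funext i
    show _ = groupRingExtend R G I M f m i * MonoidAlgebra.single h r
    unfold groupRingExtend
    rw [Finset.sum_mul]
    refine Fintype.sum_equiv (Equiv.mulLeft h) _ _ fun g => ?_
    have key : op (MonoidAlgebra.single g (1 : R)) • (op (MonoidAlgebra.single h r) • m) =
        op (MonoidAlgebra.single (1 : G) r) •
          (op (MonoidAlgebra.single (h * g) (1 : R)) • m) := by
      rw [← mul_smul, ← mul_smul, ← op_mul, ← op_mul]
      simp [MonoidAlgebra.single_mul_single]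
    rw [key, hsmul]
    show MonoidAlgebra.single g⁻¹ _ = _
    rw [MonoidAlgebra.single_mul_single]
    simp [mul_assoc]
  -- zero scalar
  have hZero : groupRingExtend R G I M f 0 = 0 := by
    funext i
    show ∑ g : G, _ = (0 : MonoidAlgebra R G)
    refine Finset.sum_eq_zero fun g _ => ?_
    rw [smul_zero, hf0]
    simp
  -- general scalar compatibility
  have hSmul : ∀ (s : MonoidAlgebra R G) (m : M),
      groupRingExtend R G I M f (op s • m) =
        fun i => groupRingExtend R G I M f m i * s := by
    intro s
    induction s using MonoidAlgebra.induction_linear with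
    | zero =>
      intro m
      have h0' : (op (0 : MonoidAlgebra R G)) • m = 0 := by rw [op_zero, zero_smul]
      rw [h0', hZero]
      funext i
      simp
    | add p q hp hq =>
      intro m
      have hpq : (MulOpposite.op (α := MonoidAlgebra R G) (p + q)) • m =
          MulOpposite.op (α := MonoidAlgebra R G) p • m +
            MulOpposite.op (α := MonoidAlgebra R G) q • m := by
        rw [op_add, add_smul]
      rw [hpq, hAdd, hp, hq]
      funext i
      simp [mul_add]
    | single g r =>
      intro m
      exact hSingle m g r
  refine ⟨?_, hAdd, fun m s => hSmul s m⟩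
  intro m m' h
  apply hinj
  funext i
  have e : ∀ m : M, op (MonoidAlgebra.single (1 : G) (1 : R)) • m = m := by
    intro m
    rw [← MonoidAlgebra.one_def, op_one, one_smul]
  have h2 := congrArg (fun x : MonoidAlgebra R G =>
    (Finsupp.applyAddHom (1 : G) : (G →₀ R) →+ R) x.coeff) (congrFun h i)
  simp only [groupRingExtend] at h2
  rw [MonoidAlgebra.coeff_sum, MonoidAlgebra.coeff_sum, map_sum, map_sum] at h2
  simpa [MonoidAlgebra.coeff_single, Finsupp.single_apply, inv_eq_one, Finset.sum_ite_eq', e] using h2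
end
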